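/- (Corollary) For any finite directed graph G_A = (V_A, E_A), running the neighbor matching iteration with G_B = G_A, for each node i ∈ V_A the limit similarity score satisfies x_{ii} = lim_{k→∞} x^k_{ii} = 1; that is, when a graph is compared to itself, every node has similarity 1 to itself. -/
import Mathlib


open Finset Filter Topology

/-- A matching of finite sets `A` and `B`: a set of pairs, each with first
component in `A` and second in `B`, such that no element of either set occurs
in more than one pair. -/
def IsMatching {α β : Type*} (A : Finset α) (B : Finset β) (M : Finset (α × β)) : Prop :=
  (∀ p ∈ M, p.1 ∈ A ∧ p.2 ∈ B) ∧
  (∀ p ∈ M, ∀ q ∈ M, p.1 = q.1 → p = q) ∧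
  (∀ p ∈ M, ∀ q ∈ M, p.2 = q.2 → p = q)

open Classical in
/-- The optimal matching weight `W(A,B,w)`: the maximum over all matchings `M`
of `A` and `B` of the total weight `∑ (a,b) ∈ M, w a b` (the empty matching is allowed). -/
noncomputable def optWeight {α β : Type*} (A : Finset α) (B : Finset β)
    (w : α → β → ℝ) : ℝ :=
  ((A ×ˢ B).powerset.filter fun M => IsMatching A B M).sup'
    ⟨∅, by simp [IsMatching]⟩ (fun M => ∑ p ∈ M, w p.1 p.2)

open Classical in
/-- The in-neighbors of node `i` in the directed graph with nodes `V` and edges `E`. -/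
noncomputable def inNbrs {α : Type*} (V : Finset α) (E : Finset (α × α)) (i : α) : Finset α :=
  V.filter fun p => (p, i) ∈ E

open Classical in
/-- The out-neighbors of node `i` in the directed graph with nodes `V` and edges `E`. -/
noncomputable def outNbrs {α : Type*} (V : Finset α) (E : Finset (α × α)) (i : α) : Finset α :=
  V.filter fun q => (i, q) ∈ E

/-- In-similarity of `i ∈ V_A` and `j ∈ V_B` computed from the similarity matrix `x`:
`W(In(i), In(j), x) / max(id(i), id(j))` when `max(id(i), id(j)) > 0`, and `1` otherwise. -/
noncomputable def sIn {α β : Type*} (VA : Finset α) (EA : Finset (α × α))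
    (VB : Finset β) (EB : Finset (β × β)) (x : α → β → ℝ) (i : α) (j : β) : ℝ :=
  if max (inNbrs VA EA i).card (inNbrs VB EB j).card = 0 then 1
  else optWeight (inNbrs VA EA i) (inNbrs VB EB j) x /
    (max (inNbrs VA EA i).card (inNbrs VB EB j).card : ℝ)

/-- Out-similarity of `i ∈ V_A` and `j ∈ V_B` computed from the similarity matrix `x`:
`W(Out(i), Out(j), x) / max(od(i), od(j))` when `max(od(i), od(j)) > 0`, and `1` otherwise. -/
noncomputable def sOut {α β : Type*} (VA : Finset α) (EA : Finset (α × α))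
    (VB : Finset β) (EB : Finset (β × β)) (x : α → β → ℝ) (i : α) (j : β) : ℝ :=
  if max (outNbrs VA EA i).card (outNbrs VB EB j).card = 0 then 1
  else optWeight (outNbrs VA EA i) (outNbrs VB EB j) x /
    (max (outNbrs VA EA i).card (outNbrs VB EB j).card : ℝ)

/-- The neighbor matching update operator: `F(x)_{ij} = (s_in(i,j;x) + s_out(i,j;x)) / 2`. -/
noncomputable def nmUpdate {α β : Type*} (VA : Finset α) (EA : Finset (α × α))
    (VB : Finset β) (EB : Finset (β × β)) (x : α → β → ℝ) : α → β → ℝ :=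
  fun i j => (sIn VA EA VB EB x i j + sOut VA EA VB EB x i j) / 2

/-- The neighbor matching iteration: `x⁰_{ij} = 1` and `x^{k+1} = F(x^k)`. -/
noncomputable def nmIter {α β : Type*} (VA : Finset α) (EA : Finset (α × α))
    (VB : Finset β) (EB : Finset (β × β)) : ℕ → α → β → ℝ
  | 0 => fun _ _ => 1
  | k + 1 => nmUpdate VA EA VB EB (nmIter VA EA VB EB k)

open Classical in
lemma empty_mem_matchings {α β : Type*} (A : Finset α) (B : Finset β) :
    (∅ : Finset (α × β)) ∈ (A ×ˢ B).powerset.filter fun M => IsMatching A B M := by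
  classical
  simp [IsMatching]

lemma optWeight_nonneg {α β : Type*} (A : Finset α) (B : Finset β) (w : α → β → ℝ) :
    0 ≤ optWeight A B w := by
  classical
  have h := Finset.le_sup' (fun M => ∑ p ∈ M, w p.1 p.2) (empty_mem_matchings A B)
  simpa [optWeight] using h

lemma optWeight_le_card {α β : Type*} (A : Finset α) (B : Finset β) (w : α → β → ℝ)
    (hw : ∀ a b, w a b ≤ 1) : optWeight A B w ≤ (A.card : ℝ) := by
  classical
  unfold optWeight
  apply Finset.sup'_le
  intro M hM
  simp only [Finset.mem_filter, Finset.mem_powerset] at hM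
  obtain ⟨hsub, hmem, hinj1, _⟩ := hM
  calc ∑ p ∈ M, w p.1 p.2 ≤ ∑ _p ∈ M, (1 : ℝ) := by
        apply Finset.sum_le_sum
        intro p _
        exact hw p.1 p.2
    _ = (M.card : ℝ) := by simp
    _ ≤ (A.card : ℝ) := by
        have : M.card ≤ A.card := by
          apply Finset.card_le_card_of_injOn Prod.fst
          · intro p hp; exact (hmem p hp).1
          · intro p hp q hq h; exact hinj1 p hp q hq h
        exact_mod_cast this

lemma optWeight_diag_ge {α : Type*} (A : Finset α) (w : α → α → ℝ) :
    (∑ a ∈ A, w a a) ≤ optWeight A A w := by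
  classical
  set M : Finset (α × α) := A.image fun a => (a, a) with hMdef
  have hmemM : ∀ p ∈ M, p.1 ∈ A ∧ p.1 = p.2 := by
    intro p hp
    simp only [hMdef, Finset.mem_image] at hp
    obtain ⟨a, ha, rfl⟩ := hp
    exact ⟨ha, rfl⟩
  have hM : M ∈ (A ×ˢ A).powerset.filter fun M => IsMatching A A M := by
    simp only [Finset.mem_filter, Finset.mem_powerset]
    refine ⟨?_, ?_, ?_, ?_⟩
    · intro p hp
      obtain ⟨ha, heq⟩ := hmemM p hp
      rw [Finset.mem_product]
      exact ⟨ha, heq ▸ ha⟩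
    · intro p hp
      obtain ⟨ha, heq⟩ := hmemM p hp
      exact ⟨ha, heq ▸ ha⟩
    · intro p hp q hq h
      obtain ⟨_, hp2⟩ := hmemM p hp
      obtain ⟨_, hq2⟩ := hmemM q hq
      exact Prod.ext h (by rw [← hp2, ← hq2, h])
    · intro p hp q hq h
      obtain ⟨_, hp2⟩ := hmemM p hp
      obtain ⟨_, hq2⟩ := hmemM q hq
      exact Prod.ext (by rw [hp2, hq2, h]) h
  have hsum : ∑ p ∈ M, w p.1 p.2 = ∑ a ∈ A, w a a := by
    rw [hMdef, Finset.sum_image]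
    intro a _ b _ h
    exact (Prod.mk.injEq _ _ _ _ ▸ h).1
  have h := Finset.le_sup' (fun M => ∑ p ∈ M, w p.1 p.2) hM
  rw [hsum] at h
  simpa [optWeight] using h

lemma nmIter_key {α : Type*} (VA : Finset α) (EA : Finset (α × α)) :
    ∀ k, (∀ i j, nmIter VA EA VA EA k i j ∈ Set.Icc (0:ℝ) 1) ∧
      (∀ i, nmIter VA EA VA EA k i i = 1) := by
  intro k
  induction k with
  | zero => simp [nmIter]
  | succ k ih =>
    obtain ⟨hb, hd⟩ := ih
    set x := nmIter VA EA VA EA k with hx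
    have hw1 : ∀ a b, x a b ≤ 1 := fun a b => (hb a b).2
    -- generic bound for a quantity of the form in sIn/sOut
    have hbound : ∀ (A B : Finset α),
        (if max A.card B.card = 0 then (1:ℝ)
          else optWeight A B x / (max A.card B.card : ℝ)) ∈ Set.Icc (0:ℝ) 1 := by
      intro A B
      split
      · exact ⟨zero_le_one, le_refl 1⟩
      · rename_i h
        have hpos : (0:ℝ) < (max A.card B.card : ℝ) := by
          have : 0 < max A.card B.card := Nat.pos_of_ne_zero h
          exact_mod_cast this
        constructor
        · exact div_nonneg (optWeight_nonneg A B x) hpos.le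
        · rw [div_le_one hpos]
          calc optWeight A B x ≤ (A.card : ℝ) := optWeight_le_card A B x hw1
            _ ≤ (max A.card B.card : ℝ) := by exact_mod_cast Nat.le_max_left _ _
    have hdiag : ∀ (A : Finset α),
        (if max A.card A.card = 0 then (1:ℝ)
          else optWeight A A x / (max A.card A.card : ℝ)) = 1 := by
      intro A
      split
      · rfl
      · rename_i h
        rw [max_self] at h ⊢
        have hge : (A.card : ℝ) ≤ optWeight A A x := by
          have := optWeight_diag_ge A x
          simpa [hd] using this
        have hle : optWeight A A x ≤ (A.card : ℝ) := optWeight_le_card A A x hw1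
        have hEq : optWeight A A x = (A.card : ℝ) := le_antisymm hle hge
        rw [hEq]
        exact div_self (by exact_mod_cast h)
    have hsInB : ∀ i j, sIn VA EA VA EA x i j ∈ Set.Icc (0:ℝ) 1 := fun i j =>
      hbound (inNbrs VA EA i) (inNbrs VA EA j)
    have hsOutB : ∀ i j, sOut VA EA VA EA x i j ∈ Set.Icc (0:ℝ) 1 := fun i j =>
      hbound (outNbrs VA EA i) (outNbrs VA EA j)
    have hsInD : ∀ i, sIn VA EA VA EA x i i = 1 := fun i => hdiag (inNbrs VA EA i)
    have hsOutD : ∀ i, sOut VA EA VA EA x i i = 1 := fun i => hdiag (outNbrs VA EA i)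
    constructor
    · intro i j
      have h1 := hsInB i j
      have h2 := hsOutB i j
      simp only [nmIter, nmUpdate, ← hx]
      constructor
      · have := add_nonneg h1.1 h2.1
        linarith
      · have := add_le_add h1.2 h2.2
        linarith
    · intro i
      simp only [nmIter, nmUpdate, ← hx]
      rw [hsInD, hsOutD]
      norm_num

/-- (Corollary) When a graph is compared to itself by the neighbor matching
iteration, every node has limit similarity `1` to itself:
`x_{ii} = lim_{k→∞} x^k_{ii} = 1` for all `i ∈ V_A`. -/
theorem nmIter_self_limit {α : Type*} (VA : Finset α) (EA : Finset (α × α))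
    (hEA : EA ⊆ VA ×ˢ VA) :
    ∀ i ∈ VA,
      Tendsto (fun k => nmIter VA EA VA EA k i i) atTop (𝓝 1) := by
  intro i _
  have h : (fun k => nmIter VA EA VA EA k i i) = fun _ => (1:ℝ) :=
    funext fun k => (nmIter_key VA EA k).2 i
  rw [h]
  exact tendsto_const_nhds
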